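/- arXiv:2211.00351 — 3 statements merged into one kernel-verified Lean document; each statement's English description precedes it below -/
import Mathlib

section
/- Let (a_n) be a sequence of positive reals such that a_n / a_{n+1} tends to 0 as n tends to infinity. Then for every κ ≥ 0, the sequence b_n = a_{2n} / (a_n² · n^κ) is unbounded. -/
/-!
If `b n` were bounded by `K`, then `a (2n) ≤ K a_n² n^c` with `c = ⌈κ⌉₊`, and iterating this along
`n = 2^j` shows that `a (2^j)` grows at most doubly exponentially, `a (2^j) ≤ L^(2^j)`. On the other
hand `a n / a (n+1) → 0` makes `R^n / a n` summable by the ratio test for every `R > 0`, so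
`a n ≥ R^n` eventually; with `R = L + 1` and `n = 2^j` this contradicts the upper bound.
-/

open Filter

theorem le_pow_two_pow_of_le_sq {M₀ : Type*} [MonoidWithZero M₀] [PartialOrder M₀]
    [PosMulMono M₀] [MulPosMono M₀] {x : ℕ → M₀} (hx : ∀ j, 0 ≤ x j)
    (h : ∀ j, x (j + 1) ≤ x j ^ 2) (j : ℕ) : x j ≤ x 0 ^ 2 ^ j := by
  induction j with
  | zero => simp
  | succ j ih =>
    calc x (j + 1) ≤ x j ^ 2 := h j
      _ ≤ (x 0 ^ 2 ^ j) ^ 2 := pow_le_pow_left₀ (hx j) ih 2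
      _ = x 0 ^ 2 ^ (j + 1) := by rw [← pow_mul, pow_succ]

theorem exists_le_pow_two_pow_of_le_mul_sq_mul_pow {a : ℕ → ℝ} (ha : ∀ n, 0 ≤ a n) {K : ℝ}
    (hK : 1 ≤ K) {c : ℕ} (h : ∀ n, 1 ≤ n → a (2 * n) ≤ K * a n ^ 2 * (n : ℝ) ^ c) :
    ∃ L, 0 ≤ L ∧ ∀ j, a (2 ^ j) ≤ L ^ 2 ^ j := by
  -- `2^(j c) · 2^((j+2) c) = (2^((j+1) c))²`, so this weight absorbs the polynomial factor.
  set x : ℕ → ℝ := fun j ↦ a (2 ^ j) * K * (2 : ℝ) ^ ((j + 1) * c)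
  have hx : ∀ j, 0 ≤ x j := fun j ↦ by have := ha (2 ^ j); positivity
  have hx_succ : ∀ j, x (j + 1) ≤ x j ^ 2 := fun j ↦ by
    have hj := h (2 ^ j) Nat.one_le_two_pow
    rw [← pow_succ'] at hj
    push_cast [← pow_mul] at hj
    calc x (j + 1) ≤ K * a (2 ^ j) ^ 2 * (2 : ℝ) ^ (j * c) * K * (2 : ℝ) ^ ((j + 2) * c) := by
          simp only [x]; gcongr
      _ = x j ^ 2 := by simp only [x]; ring
  refine ⟨x 0, hx 0, fun j ↦ le_trans ?_ (le_pow_two_pow_of_le_sq hx hx_succ j)⟩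
  have : 1 ≤ K * (2 : ℝ) ^ ((j + 1) * c) :=
    one_le_mul_of_one_le_of_one_le hK (one_le_pow₀ one_le_two)
  simpa only [x, mul_assoc] using le_mul_of_one_le_right (ha _) this

theorem eventually_pow_le_of_tendsto_div_succ_zero {a : ℕ → ℝ} (ha : ∀ n, 0 < a n)
    (hlim : Tendsto (fun n ↦ a n / a (n + 1)) atTop (nhds 0)) {R : ℝ} (hR : 0 < R) :
    ∀ᶠ n in atTop, R ^ n ≤ a n := by
  have hratio : Tendsto (fun n ↦ ‖R ^ (n + 1) / a (n + 1)‖ / ‖R ^ n / a n‖) atTop (nhds 0) := by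
    convert hlim.const_mul R using 1
    · funext n
      have := ha n
      have := ha (n + 1)
      rw [Real.norm_of_nonneg (by positivity), Real.norm_of_nonneg (by positivity)]
      field_simp
      ring
    · rw [mul_zero]
  have hs : Summable (fun n ↦ R ^ n / a n) :=
    summable_of_ratio_test_tendsto_lt_one zero_lt_one
      (.of_forall fun n ↦ (div_pos (pow_pos hR n) (ha n)).ne') hratio
  filter_upwards [hs.tendsto_atTop_zero.eventually (ge_mem_nhds zero_lt_one)] with n hn
  exact (div_le_one (ha n)).1 hn

theorem stmt0_general (a : ℕ → ℝ) (ha : ∀ n, 0 < a n)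
    (hlim : Tendsto (fun n => a n / a (n + 1)) atTop (nhds 0))
    (κ : ℝ) :
    ∀ K : ℝ, ∃ n : ℕ, 1 ≤ n ∧ K < a (2 * n) / ((a n) ^ 2 * (n : ℝ) ^ κ) := by
  intro K
  by_contra! hb
  have hpoly : ∀ n, 1 ≤ n → a (2 * n) ≤ max K 1 * a n ^ 2 * (n : ℝ) ^ ⌈κ⌉₊ := fun n hn ↦ by
    have hn' : (1 : ℝ) ≤ n := by exact_mod_cast hn
    have := ha n
    have hpow : (n : ℝ) ^ κ ≤ (n : ℝ) ^ ⌈κ⌉₊ := by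
      rw [← Real.rpow_natCast]
      exact Real.rpow_le_rpow_of_exponent_le hn' (Nat.le_ceil κ)
    calc a (2 * n) ≤ K * (a n ^ 2 * (n : ℝ) ^ κ) := (div_le_iff₀ (by positivity)).1 (hb n hn)
      _ ≤ max K 1 * (a n ^ 2 * (n : ℝ) ^ ⌈κ⌉₊) := by gcongr; exact le_max_left _ _
      _ = max K 1 * a n ^ 2 * (n : ℝ) ^ ⌈κ⌉₊ := by ring
  obtain ⟨L, hL, hupper⟩ :=
    exists_le_pow_two_pow_of_le_mul_sq_mul_pow (fun n ↦ (ha n).le) (le_max_right K 1) hpoly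
  obtain ⟨j, hj⟩ := ((tendsto_pow_atTop_atTop_of_one_lt (α := ℕ) one_lt_two).eventually
    (eventually_pow_le_of_tendsto_div_succ_zero ha hlim (R := L + 1) (by positivity))).exists
  exact (hj.trans (hupper j)).not_gt (pow_lt_pow_left₀ (lt_add_one L) hL (by positivity))

/-- If `(a n)` is a sequence of positive reals with `a n / a (n+1) → 0`, then for every
`κ ≥ 0` the sequence `b n = a (2n) / (a n ^ 2 * n ^ κ)` (for `n ≥ 1`) is unbounded. -/
theorem stmt0 (a : ℕ → ℝ) (ha : ∀ n, 0 < a n)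
    (hlim : Tendsto (fun n => a n / a (n + 1)) atTop (nhds 0))
    (κ : ℝ) (hκ : 0 ≤ κ) :
    ∀ K : ℝ, ∃ n : ℕ, 1 ≤ n ∧ K < a (2 * n) / ((a n) ^ 2 * (n : ℝ) ^ κ) :=
  stmt0_general a ha hlim κ
end

section
/- For M ≥ 1, m ≤ M natural numbers, ρ > 0, x > 0 and y ≥ 0, the integral A(M, m, ρ, x, y) = ∫_{(ℝ_{≥0})^M} (∏_{i=1}^M s_i^{x−1} ds_i) · 1[∑_{i=1}^M s_i ≤ ρ] · (ρ − ∑_{j=1}^m s_j)^y equals ρ^{Mx+y} · Γ(x)^M · Γ((M−m)x + y + 1) / (Γ(Mx + y + 1) · Γ((M−m)x + 1)). -/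
/-!
Peel off the first coordinate `t = s₀`. For fixed `t` the other coordinates range over the
simplex of size `ρ - t`, and for `m ≥ 1` the integrand is `t^(x-1)` times the integrand of the
same problem with `(M - 1, m - 1, ρ - t)`. By induction that slice integral is a constant times
`(ρ - t)^((M-1)x+y)`, so the `t`-integral is a Beta integral, and the Gamma factors telescope.
For `m = 0` the factor `ρ^y` is constant and the same recursion computes the Dirichlet volume
`∫ ∏ sᵢ^(x-1) = ρ^(Mx) Γ(x)^M / Γ(Mx+1)`.
-/

open MeasureTheory Real Set
open ProbabilityTheory (beta beta_pos lintegral_betaPDF lintegral_betaPDF_eq_one)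

def solidSimplex (n : ℕ) (ρ : ℝ) : Set (Fin n → ℝ) :=
  {s | (∀ i, 0 ≤ s i) ∧ ∑ i, s i ≤ ρ}

lemma measurableSet_solidSimplex (n : ℕ) (ρ : ℝ) : MeasurableSet (solidSimplex n ρ) := by
  simp only [solidSimplex, ofPred_and, ofPred_forall]
  exact (MeasurableSet.iInter fun i =>
    measurableSet_le measurable_const (measurable_pi_apply i)).inter
    (measurableSet_le (Finset.measurable_sum _ fun i _ => measurable_pi_apply i) measurable_const)

lemma solidSimplex_zero {ρ : ℝ} (hρ : 0 ≤ ρ) : solidSimplex 0 ρ = univ :=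
  eq_univ_of_forall fun _ => ⟨finZeroElim, by simpa using hρ⟩

lemma sum_filter_le_of_mem_solidSimplex {n : ℕ} {ρ : ℝ} {s : Fin n → ℝ}
    (hs : s ∈ solidSimplex n ρ) (p : Fin n → Prop) [DecidablePred p] :
    ∑ j ∈ Finset.univ.filter p, s j ≤ ρ :=
  (Finset.sum_le_sum_of_subset_of_nonneg (Finset.filter_subset _ _) fun i _ _ => hs.1 i).trans hs.2

lemma cons_mem_solidSimplex_iff {n : ℕ} {ρ t : ℝ} {u : Fin n → ℝ} :
    (Fin.cons t u : Fin (n + 1) → ℝ) ∈ solidSimplex (n + 1) ρ ↔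
      t ∈ Icc 0 ρ ∧ u ∈ solidSimplex n (ρ - t) := by
  simp only [solidSimplex, mem_ofPred_eq, Fin.forall_fin_succ, Fin.cons_zero, Fin.cons_succ,
    Fin.sum_cons, mem_Icc]
  constructor
  · rintro ⟨⟨ht, hu⟩, hsum⟩
    exact ⟨⟨ht, by linarith [Finset.sum_nonneg fun i (_ : i ∈ Finset.univ) => hu i]⟩, hu,
      by linarith⟩
  · rintro ⟨⟨ht, -⟩, hu, hsum⟩
    exact ⟨⟨ht, hu⟩, by linarith⟩

lemma lintegral_solidSimplex_succ {n : ℕ} (ρ : ℝ) {F : (Fin (n + 1) → ℝ) → ENNReal}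
    (hF : Measurable F) :
    ∫⁻ s in solidSimplex (n + 1) ρ, F s =
      ∫⁻ t in Ioo 0 ρ, ∫⁻ u in solidSimplex n (ρ - t), F (Fin.cons t u) := by
  have hcons : ∀ p : ℝ × (Fin n → ℝ),
      (MeasurableEquiv.piFinSuccAbove (fun _ => ℝ) 0).symm p = Fin.cons p.1 p.2 := fun p => by
    simp [MeasurableEquiv.piFinSuccAbove_symm_apply, Fin.consEquiv]
  have hind : ∀ t u, (solidSimplex (n + 1) ρ).indicator F (Fin.cons t u) =
      (Icc 0 ρ).indicator
        (fun t => (solidSimplex n (ρ - t)).indicator (fun u => F (Fin.cons t u)) u) t := by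
    intro t u
    by_cases ht : t ∈ Icc 0 ρ
    · rw [indicator_of_mem ht]
      by_cases hu : u ∈ solidSimplex n (ρ - t)
      · rw [indicator_of_mem (cons_mem_solidSimplex_iff.2 ⟨ht, hu⟩), indicator_of_mem hu]
      · rw [indicator_of_notMem (fun h => hu (cons_mem_solidSimplex_iff.1 h).2),
          indicator_of_notMem hu]
    · rw [indicator_of_notMem ht,
        indicator_of_notMem (fun h => ht (cons_mem_solidSimplex_iff.1 h).1)]
  have hFi := hF.indicator (measurableSet_solidSimplex (n + 1) ρ)
  rw [← lintegral_indicator (measurableSet_solidSimplex _ _),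
    ← ((volume_preserving_piFinSuccAbove (fun _ => ℝ) 0).symm _).lintegral_comp hFi,
    Measure.volume_eq_prod, lintegral_prod (fun p => (solidSimplex (n + 1) ρ).indicator F
      ((MeasurableEquiv.piFinSuccAbove (fun _ => ℝ) 0).symm p))
      (hFi.comp (MeasurableEquiv.measurable _)).aemeasurable,
    setLIntegral_congr Ioo_ae_eq_Icc, ← lintegral_indicator measurableSet_Icc]
  congr 1 with t
  simp only [hcons, hind]
  by_cases ht : t ∈ Icc 0 ρ
  · simp only [indicator_of_mem ht, ← lintegral_indicator (measurableSet_solidSimplex _ _)]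
  · simp [indicator_of_notMem ht]

lemma lintegral_Ioo_rpow_mul_sub_rpow {a b ρ : ℝ} (ha : 0 < a) (hb : 0 < b) (hρ : 0 < ρ) :
    ∫⁻ t in Ioo 0 ρ, ENNReal.ofReal (t ^ (a - 1) * (ρ - t) ^ (b - 1)) =
      ENNReal.ofReal (ρ ^ (a + b - 1) * beta a b) := by
  have himage : (ρ * ·) '' Ioo 0 1 = Ioo 0 ρ := by
    simpa using image_mul_left_Ioo (a := ρ) (b := 0) (c := 1) hρ
  -- after substituting `t = ρ u`, the integrand is a multiple of the normalized Beta density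
  have hscale : ∀ u ∈ Ioo (0 : ℝ) 1,
      ENNReal.ofReal |ρ * 1| * ENNReal.ofReal ((ρ * u) ^ (a - 1) * (ρ - ρ * u) ^ (b - 1)) =
        ENNReal.ofReal (ρ ^ (a + b - 1) * beta a b) *
          ENNReal.ofReal (1 / beta a b * u ^ (a - 1) * (1 - u) ^ (b - 1)) := by
    intro u ⟨hu0, hu1⟩
    have hbeta := beta_pos ha hb
    rw [← ENNReal.ofReal_mul (abs_nonneg _), ← ENNReal.ofReal_mul (by positivity),
      ← mul_one_sub, mul_rpow hρ.le hu0.le, mul_rpow hρ.le (by linarith),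
      show a + b - 1 = (a - 1) + (b - 1) + 1 by ring, rpow_add hρ, rpow_add hρ, rpow_one,
      mul_one, abs_of_pos hρ]
    congr 1
    field_simp
  rw [← himage, lintegral_image_eq_lintegral_abs_deriv_mul measurableSet_Ioo
      (fun u _ => ((hasDerivAt_id' u).const_mul ρ).hasDerivWithinAt)
      (mul_right_injective₀ hρ.ne').injOn, setLIntegral_congr_fun measurableSet_Ioo hscale,
    lintegral_const_mul _ (by fun_prop), ← lintegral_betaPDF,
    lintegral_betaPDF_eq_one ha hb, mul_one]

lemma lintegral_solidSimplex_succ_of_eq {n : ℕ} {ρ x c K : ℝ} (hρ : 0 < ρ) (hx : 0 < x)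
    (hc : 0 < c + 1) {F : (Fin (n + 1) → ℝ) → ENNReal} (hF : Measurable F)
    (hslice : ∀ t ∈ Ioo 0 ρ, ∫⁻ u in solidSimplex n (ρ - t), F (Fin.cons t u) =
      ENNReal.ofReal (t ^ (x - 1)) * ENNReal.ofReal ((ρ - t) ^ c * K)) :
    ∫⁻ s in solidSimplex (n + 1) ρ, F s =
      ENNReal.ofReal (ρ ^ (x + c) * beta x (c + 1) * K) := by
  have hsplit : ∀ t ∈ Ioo 0 ρ,
      ENNReal.ofReal (t ^ (x - 1)) * ENNReal.ofReal ((ρ - t) ^ c * K) =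
      ENNReal.ofReal (t ^ (x - 1) * (ρ - t) ^ (c + 1 - 1)) * ENNReal.ofReal K := fun t ht => by
    rw [add_sub_cancel_right, ENNReal.ofReal_mul (rpow_nonneg (sub_pos.2 ht.2).le _),
      ENNReal.ofReal_mul (rpow_nonneg ht.1.le _), mul_assoc]
  rw [lintegral_solidSimplex_succ ρ hF, setLIntegral_congr_fun measurableSet_Ioo hslice,
    setLIntegral_congr_fun measurableSet_Ioo hsplit, lintegral_mul_const _ (by fun_prop),
    lintegral_Ioo_rpow_mul_sub_rpow hx hc hρ, ← ENNReal.ofReal_mul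
      (by have := beta_pos hx hc; positivity),
    add_sub_assoc, add_sub_cancel_right]

lemma sum_filter_lt_succ_cons {n m : ℕ} (t : ℝ) (u : Fin n → ℝ) :
    ∑ j ∈ Finset.univ.filter (fun j : Fin (n + 1) => (j : ℕ) < m + 1),
        (Fin.cons t u : Fin (n + 1) → ℝ) j =
      t + ∑ j ∈ Finset.univ.filter (fun j : Fin n => (j : ℕ) < m), u j := by
  simp [Finset.sum_filter, Fin.sum_univ_succ]

lemma prod_cons_rpow {n : ℕ} (t x : ℝ) (u : Fin n → ℝ) :
    ∏ i, (Fin.cons t u : Fin (n + 1) → ℝ) i ^ x = t ^ x * ∏ i, u i ^ x := by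
  simp [Fin.prod_univ_succ]

theorem lintegral_solidSimplex_prod_rpow {x ρ : ℝ} (hx : 0 < x) (hρ : 0 < ρ) (n : ℕ) :
    ∫⁻ s in solidSimplex n ρ, ENNReal.ofReal (∏ i, s i ^ (x - 1)) =
      ENNReal.ofReal (ρ ^ (n * x) * Gamma x ^ n / Gamma (n * x + 1)) := by
  induction n generalizing ρ with
  | zero => simp [solidSimplex_zero hρ.le, volume_pi]
  | succ n ih =>
    have hslice : ∀ t ∈ Ioo 0 ρ, ∫⁻ u in solidSimplex n (ρ - t),
        ENNReal.ofReal (∏ i, (Fin.cons t u : Fin (n + 1) → ℝ) i ^ (x - 1)) =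
        ENNReal.ofReal (t ^ (x - 1)) *
          ENNReal.ofReal ((ρ - t) ^ (n * x) * (Gamma x ^ n / Gamma (n * x + 1))) := by
      intro t ht
      simp only [prod_cons_rpow, ENNReal.ofReal_mul (rpow_nonneg ht.1.le _)]
      rw [lintegral_const_mul _ (by fun_prop), ih (sub_pos.2 ht.2), mul_div_assoc]
    rw [lintegral_solidSimplex_succ_of_eq hρ hx (by positivity) (by fun_prop) hslice]
    congr 1
    have := (Gamma_pos_of_pos (by positivity : (0:ℝ) < n * x + 1)).ne'
    have := (Gamma_pos_of_pos (by positivity : (0:ℝ) < (n + 1) * x + 1)).ne'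
    rw [beta]
    push_cast
    rw [show x + (n * x + 1) = (n + 1) * x + 1 by ring, show x + n * x = (n + 1) * x by ring]
    field_simp
    ring

theorem lintegral_solidSimplex_prod_rpow_mul_rpow {x y ρ : ℝ} (hx : 0 < x) (hy : 0 ≤ y)
    (hρ : 0 < ρ) {n m : ℕ} (hm : m ≤ n) :
    ∫⁻ s in solidSimplex n ρ, ENNReal.ofReal ((∏ i, s i ^ (x - 1)) *
        (ρ - ∑ j ∈ Finset.univ.filter (fun j : Fin n => (j : ℕ) < m), s j) ^ y) =
      ENNReal.ofReal (ρ ^ (n * x + y) * Gamma x ^ n * Gamma ((n - m) * x + y + 1) /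
        (Gamma (n * x + y + 1) * Gamma ((n - m) * x + 1))) := by
  induction m generalizing n ρ with
  | zero =>
    have hG := (Gamma_pos_of_pos (by positivity : (0:ℝ) < n * x + y + 1)).ne'
    simp only [Nat.not_lt_zero, Finset.filter_false, Finset.sum_empty, sub_zero,
      CharP.cast_eq_zero, mul_comm _ (ρ ^ y), ENNReal.ofReal_mul (rpow_nonneg hρ.le y)]
    rw [lintegral_const_mul _ (by fun_prop), lintegral_solidSimplex_prod_rpow hx hρ,
      ← ENNReal.ofReal_mul (rpow_nonneg hρ.le y), rpow_add hρ]
    congr 1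
    field_simp
  | succ m ih =>
    obtain ⟨n, rfl⟩ := Nat.exists_eq_add_of_le' (Nat.one_le_of_lt hm)
    have hmn : m ≤ n := Nat.le_of_succ_le_succ hm
    have hnm : (0:ℝ) ≤ (n - m) * x := mul_nonneg (sub_nonneg.2 (by exact_mod_cast hmn)) hx.le
    have hslice : ∀ t ∈ Ioo 0 ρ, ∫⁻ u in solidSimplex n (ρ - t),
        ENNReal.ofReal ((∏ i, (Fin.cons t u : Fin (n + 1) → ℝ) i ^ (x - 1)) *
          (ρ - ∑ j ∈ Finset.univ.filter (fun j : Fin (n + 1) => (j : ℕ) < m + 1),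
            (Fin.cons t u : Fin (n + 1) → ℝ) j) ^ y) =
        ENNReal.ofReal (t ^ (x - 1)) * ENNReal.ofReal ((ρ - t) ^ (n * x + y) *
          (Gamma x ^ n * Gamma ((n - m) * x + y + 1) /
            (Gamma (n * x + y + 1) * Gamma ((n - m) * x + 1)))) := by
      intro t ht
      simp only [prod_cons_rpow, sum_filter_lt_succ_cons, ← sub_sub, mul_assoc,
        ENNReal.ofReal_mul (rpow_nonneg ht.1.le _)]
      rw [lintegral_const_mul _ (by fun_prop), ih (sub_pos.2 ht.2) hmn, mul_assoc,
        mul_div_assoc]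
    rw [lintegral_solidSimplex_succ_of_eq hρ hx (by positivity) (by fun_prop) hslice]
    congr 1
    have := (Gamma_pos_of_pos (by positivity : (0:ℝ) < n * x + y + 1)).ne'
    have := (Gamma_pos_of_pos (by positivity : (0:ℝ) < (n + 1) * x + y + 1)).ne'
    have := (Gamma_pos_of_pos (by positivity : (0:ℝ) < (n - m) * x + 1)).ne'
    rw [beta]
    push_cast
    rw [show x + (n * x + y + 1) = (n + 1) * x + y + 1 by ring,
      show x + (n * x + y) = (n + 1) * x + y by ring, show (n + 1 - (m + 1) : ℝ) = n - m by ring]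
    field_simp
    ring

theorem stmt2_general (M m : ℕ) (hm : m ≤ M) (ρ x y : ℝ)
    (hρ : 0 < ρ) (hx : 0 < x) (hy : 0 ≤ y) :
    (∫ s : Fin M → ℝ in {s : Fin M → ℝ | (∀ i, 0 ≤ s i) ∧ ∑ i, s i ≤ ρ},
        (∏ i, (s i) ^ (x - 1)) *
          (ρ - ∑ j ∈ Finset.univ.filter (fun j : Fin M => (j : ℕ) < m), s j) ^ y)
      = ρ ^ ((M : ℝ) * x + y) * (Real.Gamma x) ^ M *
          Real.Gamma (((M : ℝ) - (m : ℝ)) * x + y + 1) /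
        (Real.Gamma ((M : ℝ) * x + y + 1) * Real.Gamma (((M : ℝ) - (m : ℝ)) * x + 1)) := by
  change ∫ s in solidSimplex M ρ, _ = _
  have hMm : (0 : ℝ) ≤ (M - m) * x := mul_nonneg (sub_nonneg.2 (by exact_mod_cast hm)) hx.le
  have hnonneg : ∀ s ∈ solidSimplex M ρ, 0 ≤ (∏ i, s i ^ (x - 1)) *
      (ρ - ∑ j ∈ Finset.univ.filter (fun j : Fin M => (j : ℕ) < m), s j) ^ y := fun s hs =>
    mul_nonneg (Finset.prod_nonneg fun i _ => rpow_nonneg (hs.1 i) _)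
      (rpow_nonneg (sub_nonneg.2 (sum_filter_le_of_mem_solidSimplex hs _)) _)
  rw [integral_eq_lintegral_of_nonneg_ae
      (ae_restrict_of_forall_mem (measurableSet_solidSimplex M ρ) hnonneg) (by fun_prop),
    lintegral_solidSimplex_prod_rpow_mul_rpow hx hy hρ hm, ENNReal.toReal_ofReal]
  have := Gamma_pos_of_pos (by positivity : (0 : ℝ) < (M - m) * x + y + 1)
  have := Gamma_pos_of_pos (by positivity : (0 : ℝ) < (M - m) * x + 1)
  positivity

/-- The Dirichlet-type simplex integral
`A(M, m, ρ, x, y) = ∫_{s_i ≥ 0, ∑ s_i ≤ ρ} (∏ s_i^{x-1}) (ρ - ∑_{j<m} s_j)^y ds`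
equals `ρ^{Mx+y} Γ(x)^M Γ((M-m)x+y+1) / (Γ(Mx+y+1) Γ((M-m)x+1))`. -/
theorem stmt2 (M m : ℕ) (hM : 1 ≤ M) (hm : m ≤ M) (ρ x y : ℝ)
    (hρ : 0 < ρ) (hx : 0 < x) (hy : 0 ≤ y) :
    (∫ s : Fin M → ℝ in {s : Fin M → ℝ | (∀ i, 0 ≤ s i) ∧ ∑ i, s i ≤ ρ},
        (∏ i, (s i) ^ (x - 1)) *
          (ρ - ∑ j ∈ Finset.univ.filter (fun j : Fin M => (j : ℕ) < m), s j) ^ y)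
      = ρ ^ ((M : ℝ) * x + y) * (Real.Gamma x) ^ M *
          Real.Gamma (((M : ℝ) - (m : ℝ)) * x + y + 1) /
        (Real.Gamma ((M : ℝ) * x + y + 1) * Real.Gamma (((M : ℝ) - (m : ℝ)) * x + 1)) :=
  stmt2_general M m hm ρ x y hρ hx hy
end

section
/- Let d ≥ 1, ρ ∈ (0,1], p ∈ [1,2), λ ∈ ℝ, and m ≥ 1. Then the integral ∫_{B_1^m} (∏_{i=1}^m |k_i|^{λ/p − 1/2} · |ρ/2 − |k_i||^{−1}) · 1[∑_{i=1}^m |k_i| ≤ ρ] dk_1 ⋯ dk_m diverges (equals +∞), provided λ/p − 1/2 > −d. -/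
/-!
Fix one coordinate `i₀`. On a box where `‖k i₀‖` runs through the annulus `ρ/4 < ‖k i₀‖ < ρ/2`
and the other coordinates stay in a thin annulus of radius `≈ ρ/(4m)`, the constraint
`∑ ‖k i‖ ≤ ρ` holds and every factor except `|ρ/2 - ‖k i₀‖|⁻¹` is bounded below by a positive
constant. The integral over the box therefore dominates a positive multiple of
`∫ (ρ/2 - ‖x‖)⁻¹ dx` over the annulus, which in polar coordinates is
`∫ r^(d-1) (ρ/2 - r)⁻¹ dr` and diverges logarithmically at `r = ρ/2`.
-/

open MeasureTheory Set

lemma min_rpow_le_rpow {a b t : ℝ} (c : ℝ) (ha : 0 < a) (hat : a ≤ t) (htb : t ≤ b) :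
    min (a ^ c) (b ^ c) ≤ t ^ c := by
  rcases le_total 0 c with hc | hc
  · exact (min_le_left _ _).trans (Real.rpow_le_rpow ha.le hat hc)
  · exact (min_le_right _ _).trans (Real.rpow_le_rpow_of_nonpos (ha.trans_le hat) htb hc)

lemma min_rpow_mul_inv_sub_le {a b t r : ℝ} (c : ℝ) (ha : 0 < a) (ht : t ∈ Ioo a b)
    (htr : t < r) :
    min (a ^ c) (b ^ c) * (r - t)⁻¹ ≤ t ^ c * |r - t|⁻¹ := by
  rw [abs_of_pos (sub_pos.2 htr)]
  exact mul_le_mul_of_nonneg_right (min_rpow_le_rpow c ha ht.1.le ht.2.le)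
    (inv_nonneg.2 (sub_pos.2 htr).le)

lemma not_integrableOn_pow_mul_inv_sub {a b : ℝ} (ha : 0 < a) (hab : a < b) (n : ℕ) :
    ¬ IntegrableOn (fun y => y ^ n * (b - y)⁻¹) (Ioo a b) := by
  intro h
  have hpow : ContinuousOn (fun y : ℝ => (y ^ n)⁻¹) (Icc a b) :=
    (continuousOn_pow n).inv₀ fun y hy => pow_ne_zero n (ha.trans_le hy.1).ne'
  have hinv : IntegrableOn (fun y => (y - b)⁻¹) (Ioo a b) := by
    refine (h.continuousOn_mul_of_subset hpow isCompact_Icc measurableSet_Ioo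
      Ioo_subset_Icc_self).neg.congr_fun (fun y hy => ?_) measurableSet_Ioo
    rw [Pi.neg_apply, inv_mul_cancel_left₀ (pow_ne_zero n (ha.trans hy.1).ne'), ← inv_neg,
      neg_sub]
  have := (intervalIntegrable_iff_integrableOn_Ioo_of_le hab.le).mpr hinv
  simp [hab.ne, hab.le] at this

lemma setLIntegral_inv_sub_norm_eq_top {E : Type*} [NormedAddCommGroup E] [NormedSpace ℝ E]
    [FiniteDimensional ℝ E] [Nontrivial E] [MeasurableSpace E] [BorelSpace E]
    (μ : Measure E) [μ.IsAddHaarMeasure] {a b : ℝ} (ha : 0 < a) (hab : a < b) :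
    ∫⁻ x in (‖·‖) ⁻¹' Ioo a b, ENNReal.ofReal (b - ‖x‖)⁻¹ ∂μ = ⊤ := by
  by_contra hfin
  have hmeas : MeasurableSet ((‖·‖) ⁻¹' Ioo a b : Set E) :=
    measurableSet_Ioo.preimage (by fun_prop)
  have hint : IntegrableOn (fun x : E => (b - ‖x‖)⁻¹) ((‖·‖) ⁻¹' Ioo a b) μ := by
    refine (lintegral_ofReal_ne_top_iff_integrable (by fun_prop) ?_).1 hfin
    exact (ae_restrict_iff' hmeas).2 (.of_forall fun x hx => inv_nonneg.2 (sub_nonneg.2 hx.2.le))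
  have hrad := (integrable_fun_norm_addHaar μ (f := (Ioo a b).indicator fun r => (b - r)⁻¹)).1
    ((integrable_indicator_iff hmeas).2 hint)
  refine not_integrableOn_pow_mul_inv_sub ha hab (Module.finrank ℝ E - 1) ?_
  refine (hrad.mono_set fun y hy => ha.trans hy.1).congr_fun (fun y hy => ?_) measurableSet_Ioo
  simp [indicator_of_mem hy]

lemma measure_norm_preimage_Ioo_pos {E : Type*} [NormedAddCommGroup E] [NormedSpace ℝ E]
    [Nontrivial E] [MeasurableSpace E] (μ : Measure E) [μ.IsOpenPosMeasure] {a b : ℝ}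
    (ha : 0 ≤ a) (hab : a < b) :
    0 < μ ((‖·‖) ⁻¹' Ioo a b) := by
  obtain ⟨x, hx⟩ := exists_norm_eq E (c := (a + b) / 2) (by linarith)
  refine (isOpen_Ioo.preimage continuous_norm).measure_pos μ ⟨x, ?_⟩
  simp only [mem_preimage, mem_Ioo, hx]
  constructor <;> linarith

lemma setLIntegral_univ_pi_comp_eval {ι : Type*} [Fintype ι] [DecidableEq ι] {α : ι → Type*}
    [∀ i, MeasurableSpace (α i)] (μ : ∀ i, Measure (α i)) [∀ i, SigmaFinite (μ i)]
    (s : ∀ i, Set (α i)) (i : ι) {f : α i → ENNReal} (hf : Measurable f) :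
    ∫⁻ x in univ.pi s, f (x i) ∂Measure.pi μ
      = (∏ j ∈ Finset.univ.erase i, μ j (s j)) * ∫⁻ y in s i, f y ∂μ i := by
  rw [Measure.restrict_pi_pi, ← lintegral_map hf (measurable_pi_apply i), Measure.pi_map_eval,
    lintegral_smul_measure]
  simp

-- An annulus rather than a ball for `j ≠ i₀`: near `0`, `‖k j‖ ^ c` is not bounded below
-- by a positive constant when `c > 0`.
def shellBox (E : Type*) [SeminormedAddCommGroup E] {m : ℕ} (ρ : ℝ) (i₀ : Fin m) :
    Set (Fin m → E) :=
  univ.pi fun i =>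
    if i = i₀ then (‖·‖) ⁻¹' Ioo (ρ / 4) (ρ / 2) else (‖·‖) ⁻¹' Ioo (ρ / (8 * m)) (ρ / (4 * m))

section shellBox

variable {E : Type*} [SeminormedAddCommGroup E] {m : ℕ} {ρ : ℝ} {i₀ : Fin m}

lemma mem_shellBox {k : Fin m → E} :
    k ∈ shellBox E ρ i₀ ↔
      ‖k i₀‖ ∈ Ioo (ρ / 4) (ρ / 2) ∧ ∀ j ≠ i₀, ‖k j‖ ∈ Ioo (ρ / (8 * m)) (ρ / (4 * m)) := by
  simp only [shellBox, mem_univ_pi]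
  constructor
  · intro h
    exact ⟨by simpa using h i₀, fun j hj => by simpa [hj] using h j⟩
  · rintro ⟨h₀, hj⟩ i
    split_ifs with hi
    · exact hi ▸ h₀
    · exact hj i hi

lemma measurableSet_shellBox [MeasurableSpace E] [OpensMeasurableSpace E] :
    MeasurableSet (shellBox E ρ i₀) :=
  .univ_pi fun i => by
    split_ifs <;> exact measurableSet_Ioo.preimage (by fun_prop)

lemma sum_norm_le_of_mem_shellBox (hρ : 0 < ρ) {k : Fin m → E} (hk : k ∈ shellBox E ρ i₀) :
    ∑ i, ‖k i‖ ≤ ρ := by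
  obtain ⟨h₀, hj⟩ := mem_shellBox.1 hk
  have hm : (m : ℝ) ≠ 0 := Nat.cast_ne_zero.2 (Fin.pos i₀).ne'
  have hrest : ∑ j ∈ Finset.univ.erase i₀, ‖k j‖ ≤ ρ / 4 := calc
    ∑ j ∈ Finset.univ.erase i₀, ‖k j‖ ≤ ∑ _j ∈ Finset.univ.erase i₀, ρ / (4 * m) :=
      Finset.sum_le_sum fun j hj' => (hj j (Finset.ne_of_mem_erase hj')).2.le
    _ ≤ ∑ _j : Fin m, ρ / (4 * m) :=
      Finset.sum_le_sum_of_subset_of_nonneg (Finset.erase_subset _ _) fun _ _ _ => by positivity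
    _ = ρ / 4 := by
      rw [Finset.sum_const, Finset.card_univ, Fintype.card_fin, nsmul_eq_mul]
      field_simp
  rw [← Finset.add_sum_erase _ _ (Finset.mem_univ i₀)]
  linarith [h₀.2]

lemma exists_pos_mul_inv_le_prod_of_mem_shellBox (hρ : 0 < ρ) (c : ℝ) :
    ∃ C > 0, ∀ k ∈ shellBox E ρ i₀,
      C * (ρ / 2 - ‖k i₀‖)⁻¹ ≤ ∏ i, ‖k i‖ ^ c * |ρ / 2 - ‖k i‖|⁻¹ := by
  have hm : (1 : ℝ) ≤ m := Nat.one_le_cast.2 (Fin.pos i₀)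
  have h8m : 0 < ρ / (8 * m) := by positivity
  have h4m : ρ / (4 * m) < ρ / 2 := by
    rw [div_lt_div_iff_of_pos_left hρ (by positivity) two_pos]; linarith
  set c₀ := min ((ρ / 4) ^ c) ((ρ / 2) ^ c)
  set c₁ := min ((ρ / (8 * m)) ^ c) ((ρ / (4 * m)) ^ c)
  have hc₀ : 0 < c₀ := lt_min (by positivity) (by positivity)
  have hc₁ : 0 < c₁ := lt_min (by positivity) (by positivity)
  refine ⟨c₀ * ∏ _j ∈ Finset.univ.erase i₀, c₁ * (ρ / 2)⁻¹,
    mul_pos hc₀ (Finset.prod_pos fun _ _ => by positivity), fun k hk => ?_⟩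
  obtain ⟨h₀, hj⟩ := mem_shellBox.1 hk
  rw [← Finset.mul_prod_erase _ _ (Finset.mem_univ i₀), mul_right_comm]
  refine mul_le_mul (min_rpow_mul_inv_sub_le c (by positivity) h₀ h₀.2)
    (Finset.prod_le_prod (fun _ _ => by positivity) fun j hj' => ?_)
    (Finset.prod_nonneg fun _ _ => by positivity) (by positivity)
  have hkj := hj j (Finset.ne_of_mem_erase hj')
  have hlt : ‖k j‖ < ρ / 2 := hkj.2.trans h4m
  calc c₁ * (ρ / 2)⁻¹ ≤ c₁ * (ρ / 2 - ‖k j‖)⁻¹ :=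
        mul_le_mul_of_nonneg_left (inv_anti₀ (by linarith) (by linarith [norm_nonneg (k j)]))
          hc₁.le
    _ ≤ ‖k j‖ ^ c * |ρ / 2 - ‖k j‖|⁻¹ := min_rpow_mul_inv_sub_le c h8m hkj hlt

end shellBox

lemma setLIntegral_shellBox_inv_sub_norm_eq_top {E : Type*} [NormedAddCommGroup E]
    [NormedSpace ℝ E] [FiniteDimensional ℝ E] [Nontrivial E] [MeasurableSpace E] [BorelSpace E]
    (μ : Measure E) [μ.IsAddHaarMeasure] {m : ℕ} {ρ : ℝ} (hρ : 0 < ρ) (i₀ : Fin m) :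
    ∫⁻ k in shellBox E ρ i₀, ENNReal.ofReal (ρ / 2 - ‖k i₀‖)⁻¹ ∂Measure.pi (fun _ => μ) = ⊤ := by
  have hm : (0 : ℝ) < m := Nat.cast_pos.2 (Fin.pos i₀)
  have hvol : ∏ j ∈ Finset.univ.erase i₀,
      μ (if j = i₀ then (‖·‖) ⁻¹' Ioo (ρ / 4) (ρ / 2)
        else (‖·‖) ⁻¹' Ioo (ρ / (8 * m)) (ρ / (4 * m))) ≠ 0 :=
    Finset.prod_ne_zero_iff.2 fun j hj => by
      rw [if_neg (Finset.ne_of_mem_erase hj)]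
      exact (measure_norm_preimage_Ioo_pos μ (by positivity)
        (div_lt_div_of_pos_left hρ (by positivity) (by linarith))).ne'
  rw [shellBox, setLIntegral_univ_pi_comp_eval _ _ _
      (f := fun y => ENNReal.ofReal (ρ / 2 - ‖y‖)⁻¹) (by fun_prop), if_pos rfl,
    setLIntegral_inv_sub_norm_eq_top μ (by positivity) (by linarith), ENNReal.mul_top hvol]

theorem stmt10_general (d m : ℕ) (hd : 1 ≤ d) (hm : 1 ≤ m) (ρ p lam : ℝ)
    (hρ0 : 0 < ρ) (hρ1 : ρ ≤ 1) :
    (∫⁻ k : Fin m → EuclideanSpace ℝ (Fin d) in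
        {k : Fin m → EuclideanSpace ℝ (Fin d) | ∀ i, ‖k i‖ ≤ 1},
      ENNReal.ofReal
        ((∏ i, ‖k i‖ ^ (lam / p - 1 / 2) * |ρ / 2 - ‖k i‖|⁻¹) *
          (if ∑ i, ‖k i‖ ≤ ρ then (1 : ℝ) else 0)))
      = ⊤ := by
  have : Nontrivial (EuclideanSpace ℝ (Fin d)) :=
    Module.nontrivial_of_finrank_pos (R := ℝ) (by rw [finrank_euclideanSpace_fin]; omega)
  let i₀ : Fin m := ⟨0, hm⟩
  let B := shellBox (EuclideanSpace ℝ (Fin d)) ρ i₀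
  obtain ⟨C, hC, hCle⟩ := exists_pos_mul_inv_le_prod_of_mem_shellBox
    (E := EuclideanSpace ℝ (Fin d)) (i₀ := i₀) hρ0 (lam / p - 1 / 2)
  have hB : B ⊆ {k | ∀ i, ‖k i‖ ≤ 1} := fun k hk i =>
    (Finset.single_le_sum (fun j _ => norm_nonneg (k j)) (Finset.mem_univ i)).trans
      ((sum_norm_le_of_mem_shellBox hρ0 hk).trans hρ1)
  refine top_unique ?_
  calc ⊤ = ENNReal.ofReal C * ∫⁻ k in B, ENNReal.ofReal (ρ / 2 - ‖k i₀‖)⁻¹ := by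
        rw [volume_pi, setLIntegral_shellBox_inv_sub_norm_eq_top volume hρ0,
          ENNReal.mul_top (by simpa using hC)]
    _ = ∫⁻ k in B, ENNReal.ofReal C * ENNReal.ofReal (ρ / 2 - ‖k i₀‖)⁻¹ :=
        (lintegral_const_mul _ (by fun_prop)).symm
    _ ≤ _ := setLIntegral_mono' measurableSet_shellBox fun k hk => by
        rw [if_pos (sum_norm_le_of_mem_shellBox hρ0 hk), mul_one, ← ENNReal.ofReal_mul hC.le]
        exact ENNReal.ofReal_le_ofReal (hCle k hk)
    _ ≤ _ := lintegral_mono_set hB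

/-- For `p ∈ [1, 2)` the integral
`∫_{B_1^m} ∏_i ‖k_i‖^{λ/p - 1/2} |ρ/2 - ‖k_i‖|⁻¹ · 1[∑ ‖k_i‖ ≤ ρ] dk` diverges,
provided `λ/p - 1/2 > -d`. -/
theorem stmt10 (d m : ℕ) (hd : 1 ≤ d) (hm : 1 ≤ m) (ρ p lam : ℝ)
    (hρ0 : 0 < ρ) (hρ1 : ρ ≤ 1) (hp1 : 1 ≤ p) (hp2 : p < 2)
    (hlam : lam / p - 1 / 2 > -(d : ℝ)) :
    (∫⁻ k : Fin m → EuclideanSpace ℝ (Fin d) in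
        {k : Fin m → EuclideanSpace ℝ (Fin d) | ∀ i, ‖k i‖ ≤ 1},
      ENNReal.ofReal
        ((∏ i, ‖k i‖ ^ (lam / p - 1 / 2) * |ρ / 2 - ‖k i‖|⁻¹) *
          (if ∑ i, ‖k i‖ ≤ ρ then (1 : ℝ) else 0)))
      = ⊤ :=
  stmt10_general d m hd hm ρ p lam hρ0 hρ1
end
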